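/- arXiv:2101.04708 — 2 statements merged into one kernel-verified Lean document; each statement's English description precedes it below -/
import Mathlib

section
/- Every linear system (P,𝓛) with maximum degree Δ = 2 satisfies τ ≤ ν₂ − 1. -/
open Finset

/-- A linear system: a finite family of lines (finite sets of points) on a finite
point set `P`, any two distinct lines sharing at most one point. -/
structure LinearSystem (α : Type) [DecidableEq α] where
  P : Finset α
  L : Finset (Finset α)
  sub : ∀ l ∈ L, l ⊆ P
  linear : ∀ l ∈ L, ∀ l' ∈ L, l ≠ l' → (l ∩ l').card ≤ 1

variable {α : Type} [DecidableEq α]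

/-- Any two distinct lines share exactly one point. -/
def LinearSystem.Intersecting (S : LinearSystem α) : Prop :=
  ∀ l ∈ S.L, ∀ l' ∈ S.L, l ≠ l' → (l ∩ l').card = 1

/-- Every line has exactly `r` points. -/
def LinearSystem.Uniform (S : LinearSystem α) (r : ℕ) : Prop :=
  ∀ l ∈ S.L, l.card = r

/-- The degree of a point: the number of lines containing it. -/
def LinearSystem.deg (S : LinearSystem α) (x : α) : ℕ :=
  (S.L.filter (fun l => x ∈ l)).card

/-- The maximum degree `Δ`. -/
def LinearSystem.Delta (S : LinearSystem α) : ℕ :=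
  S.P.sup S.deg

/-- A transversal: a set of points meeting every line. -/
def LinearSystem.IsTransversal (S : LinearSystem α) (T : Finset α) : Prop :=
  T ⊆ S.P ∧ ∀ l ∈ S.L, (T ∩ l).Nonempty

/-- The transversal number `τ`: the minimum size of a transversal. -/
noncomputable def LinearSystem.tau (S : LinearSystem α) : ℕ :=
  sInf {n | ∃ T : Finset α, S.IsTransversal T ∧ T.card = n}

/-- A 2-packing: a subfamily of lines such that no point lies in three of them. -/
def LinearSystem.IsTwoPacking (S : LinearSystem α) (R : Finset (Finset α)) : Prop :=
  R ⊆ S.L ∧ ∀ x : α, (R.filter (fun l => x ∈ l)).card ≤ 2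

/-- The 2-packing number `ν₂`: the maximum size of a 2-packing. -/
noncomputable def LinearSystem.nu2 (S : LinearSystem α) : ℕ :=
  sSup {n | ∃ R : Finset (Finset α), S.IsTwoPacking R ∧ R.card = n}

/-
When `Δ ≤ 2` no point lies on three lines, so the whole family of lines is a
2-packing and `ν₂ ≥ |𝓛|`. A point `x` of degree `2` together with one point from each of
the `|𝓛| - 2` lines missing `x` is a transversal, so `τ ≤ |𝓛| - 1`.
-/

theorem Finset.exists_card_le_forall_inter_nonempty (M : Finset (Finset α))
    (hM : ∀ l ∈ M, l.Nonempty) :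
    ∃ T ⊆ M.biUnion id, T.card ≤ M.card ∧ ∀ l ∈ M, (T ∩ l).Nonempty := by
  refine ⟨M.attach.image fun l => (hM l.1 l.2).choose, ?_, ?_, ?_⟩
  · simp only [subset_iff, mem_image, mem_attach, true_and, mem_biUnion, id]
    rintro _ ⟨⟨l, hl⟩, rfl⟩
    exact ⟨l, hl, (hM l hl).choose_spec⟩
  · exact card_image_le.trans (card_attach).le
  · intro l hl
    exact ⟨_, mem_inter.2 ⟨mem_image.2 ⟨⟨l, hl⟩, mem_attach _ _, rfl⟩, (hM l hl).choose_spec⟩⟩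

namespace LinearSystem

variable (S : LinearSystem α)

theorem deg_le_Delta (x : α) : S.deg x ≤ S.Delta := by
  by_cases hx : x ∈ S.P
  · exact le_sup hx
  · have : S.L.filter (fun l => x ∈ l) = ∅ :=
      filter_eq_empty_iff.2 fun l hl hxl => hx (S.sub l hl hxl)
    simp [deg, this]

theorem exists_deg_eq_Delta (h : S.Delta ≠ 0) : ∃ x ∈ S.P, S.deg x = S.Delta := by
  have hP : S.P.Nonempty := nonempty_iff_ne_empty.2 fun hP => h (by simp [Delta, hP])
  obtain ⟨x, hx, hdeg⟩ := exists_mem_eq_sup S.P hP S.deg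
  exact ⟨x, hx, hdeg.symm⟩

theorem isTwoPacking_L (h : S.Delta ≤ 2) : S.IsTwoPacking S.L :=
  ⟨Subset.rfl, fun x => (S.deg_le_Delta x).trans h⟩

theorem card_L_le_nu2 (h : S.Delta ≤ 2) : S.L.card ≤ S.nu2 := by
  refine le_csSup ⟨S.L.card, ?_⟩ ⟨S.L, S.isTwoPacking_L h, rfl⟩
  rintro _ ⟨R, hR, rfl⟩
  exact card_le_card hR.1

theorem tau_le_card {T : Finset α} (hT : S.IsTransversal T) : S.tau ≤ T.card :=
  Nat.sInf_le ⟨T, hT, rfl⟩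

-- With an empty line there is no transversal, and `sInf ∅ = 0`.
theorem tau_eq_zero_of_empty_mem (h : ∅ ∈ S.L) : S.tau = 0 := by
  refine Nat.sInf_eq_zero.2 (Or.inr (Set.eq_empty_of_forall_notMem ?_))
  rintro _ ⟨T, ⟨-, hT⟩, -⟩
  simpa using hT ∅ h

theorem tau_le_card_filter_notMem_add_one {x : α} (hx : x ∈ S.P) :
    S.tau ≤ (S.L.filter (x ∉ ·)).card + 1 := by
  by_cases hne : ∀ l ∈ S.L, l.Nonempty
  · obtain ⟨T, hTsub, hTcard, hT⟩ := (S.L.filter (x ∉ ·)).exists_card_le_forall_inter_nonempty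
      fun l hl => hne l (mem_filter.1 hl).1
    have hTP : T ⊆ S.P := hTsub.trans <| biUnion_subset.2 fun l hl => S.sub l (mem_filter.1 hl).1
    have htrans : S.IsTransversal (insert x T) := by
      refine ⟨insert_subset hx hTP, fun l hl => ?_⟩
      by_cases hxl : x ∈ l
      · exact ⟨x, mem_inter.2 ⟨mem_insert_self x T, hxl⟩⟩
      · exact (hT l (mem_filter.2 ⟨hl, hxl⟩)).mono (inter_subset_inter_right (subset_insert x T))
    exact (S.tau_le_card htrans).trans ((card_insert_le x T).trans (by omega))
  · simp only [not_forall, not_nonempty_iff_eq_empty, exists_prop] at hne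
    obtain ⟨_, hl, rfl⟩ := hne
    simp [S.tau_eq_zero_of_empty_mem hl]

theorem card_filter_notMem (x : α) : (S.L.filter (x ∉ ·)).card = S.L.card - S.deg x := by
  rw [deg, ← card_filter_add_card_filter_not (s := S.L) (fun l => x ∈ l)]
  omega

end LinearSystem

/-- Every linear system with maximum degree `Δ = 2` satisfies `τ ≤ ν₂ − 1`. -/
theorem tau_le_of_delta_eq_two (S : LinearSystem α) (hΔ : S.Delta = 2) :
    S.tau ≤ S.nu2 - 1 := by
  obtain ⟨x, hx, hdeg⟩ := S.exists_deg_eq_Delta (by omega)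
  have hdeg_le : S.deg x ≤ S.L.card := card_filter_le _ _
  have hnu2 := S.card_L_le_nu2 hΔ.le
  have htau := S.tau_le_card_filter_notMem_add_one hx
  rw [S.card_filter_notMem x] at htau
  omega
end

section
/- Every intersecting linear system (P,𝓛) with maximum degree Δ = 2 satisfies τ = ⌈ν₂/2⌉. -/
open Finset

variable {α : Type} [DecidableEq α]

/-!
Since every point lies on at most two lines, the whole family of lines is a 2-packing, so
`ν₂ = |𝓛|`, and a transversal needs at least `|𝓛| / 2` points. Conversely, since the lines pairwise
meet, pairing them up and taking one common point of each pair (plus one point of a leftover line)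
gives a transversal of size `⌈|𝓛| / 2⌉`.
-/

section HittingSet

variable {β : Type*} [DecidableEq β]

theorem Finset.exists_hittingSet_two_mul_card_le (L : Finset (Finset β))
    (hne : ∀ l ∈ L, l.Nonempty)
    (hinter : (L : Set (Finset β)).Pairwise fun l l' => (l ∩ l').Nonempty) :
    ∃ T ⊆ L.biUnion id, (∀ l ∈ L, (T ∩ l).Nonempty) ∧ 2 * T.card ≤ L.card + 1 := by
  induction L using Finset.strongInduction with
  | H L ih =>
  rcases le_or_gt L.card 1 with hL | hL
  · rcases L.eq_empty_or_nonempty with rfl | hLne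
    · exact ⟨∅, by simp, by simp, by simp⟩
    obtain ⟨l, rfl⟩ := Finset.card_eq_one.1 (le_antisymm hL hLne.card_pos)
    obtain ⟨x, hx⟩ := hne l (mem_singleton_self l)
    refine ⟨{x}, by simpa using hx, fun m hm => ?_, by simp⟩
    rw [mem_singleton.1 hm]
    exact ⟨x, mem_inter.2 ⟨mem_singleton_self x, hx⟩⟩
  obtain ⟨l, hl, l', hl', hll'⟩ := Finset.one_lt_card.1 hL
  obtain ⟨x, hx⟩ := hinter hl hl' hll'
  rw [mem_inter] at hx
  set L' := (L.erase l).erase l'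
  have hL'L : L' ⊆ L := (erase_subset _ _).trans (erase_subset _ _)
  have hL'card : L'.card + 2 = L.card := by
    rw [card_erase_of_mem (mem_erase.2 ⟨hll'.symm, hl'⟩), card_erase_of_mem hl]
    omega
  obtain ⟨T, hTsub, hThits, hTcard⟩ :=
    ih L' (ssubset_of_subset_of_ne hL'L (by rintro h; rw [h] at hL'card; omega))
      (fun m hm => hne m (hL'L hm)) (hinter.mono (by simpa using hL'L))
  refine ⟨insert x T, ?_, ?_, ?_⟩
  · exact insert_subset (mem_biUnion.2 ⟨l, hl, hx.1⟩)
      (hTsub.trans (biUnion_subset_biUnion_of_subset_left _ hL'L))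
  · intro m hm
    by_cases hm' : m ∈ L'
    · exact (hThits m hm').mono (inter_subset_inter_right (subset_insert x T))
    · have : m = l ∨ m = l' := by simp only [L', mem_erase] at hm'; tauto
      exact ⟨x, mem_inter.2 ⟨mem_insert_self x T, by rcases this with rfl | rfl <;> tauto⟩⟩
  · have := card_insert_le x T
    omega

theorem Finset.card_le_mul_card_of_hits (L : Finset (Finset β)) {T : Finset β} {k : ℕ}
    (hdeg : ∀ x, (L.filter (x ∈ ·)).card ≤ k) (hT : ∀ l ∈ L, (T ∩ l).Nonempty) :
    L.card ≤ k * T.card :=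
  calc L.card ≤ (T.biUnion fun x => L.filter (x ∈ ·)).card := by
        refine card_le_card fun l hl => ?_
        obtain ⟨x, hx⟩ := hT l hl
        rw [mem_inter] at hx
        exact mem_biUnion.2 ⟨x, hx.1, mem_filter.2 ⟨hl, hx.2⟩⟩
    _ ≤ ∑ x ∈ T, (L.filter (x ∈ ·)).card := card_biUnion_le
    _ ≤ ∑ _x ∈ T, k := sum_le_sum fun x _ => hdeg x
    _ = k * T.card := by rw [sum_const, smul_eq_mul, mul_comm]

end HittingSet

namespace LinearSystem

variable (S : LinearSystem α)

theorem Delta_le_card : S.Delta ≤ S.L.card :=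
  Finset.sup_le fun _ _ => card_filter_le _ _

theorem nu2_eq_card_of_Delta_le_two (hΔ : S.Delta ≤ 2) : S.nu2 = S.L.card := by
  have hL : S.IsTwoPacking S.L := ⟨subset_rfl, fun x => (S.deg_le_Delta x).trans hΔ⟩
  refine le_antisymm (csSup_le ⟨_, S.L, hL, rfl⟩ ?_) (le_csSup ⟨S.L.card, ?_⟩ ⟨S.L, hL, rfl⟩) <;>
  · rintro _ ⟨R, ⟨hRL, -⟩, rfl⟩
    exact card_le_card hRL

theorem card_le_Delta_mul_tau (hne : ∀ l ∈ S.L, l.Nonempty) : S.L.card ≤ S.Delta * S.tau := by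
  have hP : S.IsTransversal S.P :=
    ⟨subset_rfl, fun l hl => (hne l hl).mono (subset_inter (S.sub l hl) subset_rfl)⟩
  have hτ : S.tau ∈ {n | ∃ T : Finset α, S.IsTransversal T ∧ T.card = n} :=
    Nat.sInf_mem ⟨_, S.P, hP, rfl⟩
  obtain ⟨T, ⟨-, hT⟩, hTcard⟩ := hτ
  rw [← hTcard]
  exact card_le_mul_card_of_hits S.L S.deg_le_Delta hT

variable {S}

theorem Intersecting.pairwise_inter_nonempty (h : S.Intersecting) :
    (S.L : Set (Finset α)).Pairwise fun l l' => (l ∩ l').Nonempty :=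
  fun l hl l' hl' hne => card_pos.1 (by rw [h l hl l' hl' hne]; exact one_pos)

theorem Intersecting.nonempty_of_one_lt_card (h : S.Intersecting) (hL : 1 < S.L.card) :
    ∀ l ∈ S.L, l.Nonempty := by
  intro l hl
  obtain ⟨l', hl', hne⟩ := exists_mem_ne hL l
  exact (h.pairwise_inter_nonempty hl hl' hne.symm).mono inter_subset_left

theorem two_mul_tau_le_card_add_one (h : S.Intersecting) (hne : ∀ l ∈ S.L, l.Nonempty) :
    2 * S.tau ≤ S.L.card + 1 := by
  obtain ⟨T, hTsub, hT, hTcard⟩ :=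
    exists_hittingSet_two_mul_card_le S.L hne h.pairwise_inter_nonempty
  have hTP : T ⊆ S.P := hTsub.trans (biUnion_subset.2 S.sub)
  have := S.tau_le_card ⟨hTP, hT⟩
  omega

end LinearSystem

/-- Every intersecting linear system with maximum degree `Δ = 2`
satisfies `τ = ⌈ν₂/2⌉`. -/
theorem tau_eq_of_intersecting_delta_eq_two (S : LinearSystem α)
    (hint : S.Intersecting) (hΔ : S.Delta = 2) :
    S.tau = (S.nu2 + 1) / 2 := by
  have hL : 2 ≤ S.L.card := hΔ ▸ S.Delta_le_card
  have hne := hint.nonempty_of_one_lt_card hL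
  have hupper := S.two_mul_tau_le_card_add_one hint hne
  have hlower := S.card_le_Delta_mul_tau hne
  rw [hΔ] at hlower
  rw [S.nu2_eq_card_of_Delta_le_two hΔ.le]
  omega
end
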